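/- For every z ∈ ℂ with Im z > 0, φ̃(z) = φ(z) + iπ(1 − z), and for every z ∈ ℂ with Im z < 0, φ̃(z) = φ(z) − iπ(1 − z). -/
import Mathlib


open Complex Finset Filter Topology

/-- `a := (1−√c)/(1+√c)`. -/
noncomputable def aconst (c : ℝ) : ℝ := (1 - Real.sqrt c) / (1 + Real.sqrt c)

/-- `b := (1+√c)/(1−√c)`. -/
noncomputable def bconst (c : ℝ) : ℝ := (1 + Real.sqrt c) / (1 - Real.sqrt c)

/-- The principal branch of the complex square root. -/
noncomputable def csqrt (z : ℂ) : ℂ := z ^ (1 / 2 : ℂ)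

/-- The function `φ(z)`, defined using principal branches. -/
noncomputable def phiFun (c : ℝ) (z : ℂ) : ℂ :=
  z * Complex.log ((csqrt ((bconst c : ℂ) * z - 1) + csqrt ((aconst c : ℂ) * z - 1)) /
      (csqrt ((bconst c : ℂ) * z - 1) - csqrt ((aconst c : ℂ) * z - 1))) -
  Complex.log ((csqrt (z - (aconst c : ℂ)) + csqrt (z - (bconst c : ℂ))) /
      (csqrt (z - (aconst c : ℂ)) - csqrt (z - (bconst c : ℂ))))

/-- The function `φ̃(z)`, defined using principal branches. -/
noncomputable def phiTilde (c : ℝ) (z : ℂ) : ℂ :=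
  z * Complex.log ((csqrt (1 - (aconst c : ℂ) * z) + csqrt (1 - (bconst c : ℂ) * z)) /
      (csqrt (1 - (aconst c : ℂ) * z) - csqrt (1 - (bconst c : ℂ) * z))) -
  Complex.log ((csqrt ((bconst c : ℂ) - z) + csqrt ((aconst c : ℂ) - z)) /
      (csqrt ((bconst c : ℂ) - z) - csqrt ((aconst c : ℂ) - z)))

/-- The domain `ℂ ∖ (−∞, b]` of `φ`. -/
def phiDom (c : ℝ) : Set ℂ := {z : ℂ | ¬(z.im = 0 ∧ z.re ≤ bconst c)}

/-- The domain `ℂ ∖ ((−∞, 0] ∪ [a, ∞))` of `φ̃`. -/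
def phiTildeDom (c : ℝ) : Set ℂ := {z : ℂ | ¬(z.im = 0 ∧ (z.re ≤ 0 ∨ aconst c ≤ z.re))}

/-- The function `φ′(z) = Log[(√(bz−1)+√(az−1))/(√(bz−1)−√(az−1))]`. -/
noncomputable def phiDeriv (c : ℝ) (z : ℂ) : ℂ :=
  Complex.log ((csqrt ((bconst c : ℂ) * z - 1) + csqrt ((aconst c : ℂ) * z - 1)) /
      (csqrt ((bconst c : ℂ) * z - 1) - csqrt ((aconst c : ℂ) * z - 1)))

/- Auxiliary lemmas. -/

lemma csqrt_eq {w : ℂ} (hw : w ≠ 0) : csqrt w = Complex.exp (Complex.log w * (1/2)) := by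
  rw [csqrt, Complex.cpow_def_of_ne_zero hw]

lemma csqrt_mul_self {w : ℂ} (hw : w ≠ 0) : csqrt w * csqrt w = w := by
  rw [csqrt_eq hw, ← Complex.exp_add]
  have h : Complex.log w * (1/2) + Complex.log w * (1/2) = Complex.log w := by ring
  rw [h, Complex.exp_log hw]

lemma arg_pos_of_im_pos {w : ℂ} (hw : 0 < w.im) : 0 < w.arg := by
  rcases lt_or_eq_of_le (Complex.arg_nonneg_iff.mpr hw.le) with h | h
  · exact h
  · exact absurd (Complex.arg_eq_zero_iff.mp h.symm).2 (by linarith)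

lemma arg_lt_pi_of_im_ne {w : ℂ} (hw : w.im ≠ 0) : w.arg < Real.pi := by
  refine lt_of_le_of_ne (Complex.arg_le_pi w) (fun h => ?_)
  exact hw (Complex.arg_eq_pi_iff.mp h).2

lemma csqrt_re_im_pos {w : ℂ} (hw : 0 < w.im) : 0 < (csqrt w).re ∧ 0 < (csqrt w).im := by
  have hw0 : w ≠ 0 := fun h => by simp [h] at hw
  have h1 : 0 < w.arg := arg_pos_of_im_pos hw
  have h2 : w.arg < Real.pi := arg_lt_pi_of_im_ne (ne_of_gt hw)
  rw [csqrt_eq hw0]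
  have him : (Complex.log w * (1/2 : ℂ)).im = w.arg / 2 := by
    simp [Complex.mul_im, Complex.log_im]
    ring
  rw [Complex.exp_re, Complex.exp_im, him]
  constructor
  · have : Real.cos (w.arg / 2) > 0 := Real.cos_pos_of_mem_Ioo
      ⟨by linarith [Real.pi_pos], by linarith⟩
    positivity
  · have : Real.sin (w.arg / 2) > 0 := Real.sin_pos_of_pos_of_lt_pi (by linarith)
      (by linarith [Real.pi_pos])
    positivity

lemma csqrt_re_im_neg {w : ℂ} (hw : w.im < 0) : 0 < (csqrt w).re ∧ (csqrt w).im < 0 := by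
  have hw0 : w ≠ 0 := fun h => by simp [h] at hw
  have h1 : w.arg < 0 := Complex.arg_neg_iff.mpr hw
  have h2 : -Real.pi < w.arg := Complex.neg_pi_lt_arg w
  rw [csqrt_eq hw0]
  have him : (Complex.log w * (1/2 : ℂ)).im = w.arg / 2 := by
    simp [Complex.mul_im, Complex.log_im]
    ring
  rw [Complex.exp_re, Complex.exp_im, him]
  constructor
  · have : Real.cos (w.arg / 2) > 0 := Real.cos_pos_of_mem_Ioo
      ⟨by linarith, by linarith [Real.pi_pos]⟩
    positivity
  · have hs : Real.sin (w.arg / 2) < 0 := by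
      have := Real.sin_pos_of_pos_of_lt_pi (x := -(w.arg / 2)) (by linarith) (by linarith)
      rw [Real.sin_neg] at this; linarith
    have he : 0 < Real.exp (Complex.log w * (1/2 : ℂ)).re := Real.exp_pos _
    nlinarith

lemma log_neg_im_pos {w : ℂ} (hw : 0 < w.im) :
    Complex.log (-w) = Complex.log w - Real.pi * I := by
  apply Complex.ext
  · simp [Complex.log_re]
  · simp [Complex.log_im, Complex.arg_neg_eq_arg_sub_pi_of_im_pos hw]

lemma log_neg_im_neg {w : ℂ} (hw : w.im < 0) :
    Complex.log (-w) = Complex.log w + Real.pi * I := by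
  apply Complex.ext
  · simp [Complex.log_re]
  · simp [Complex.log_im, Complex.arg_neg_eq_arg_add_pi_of_im_neg hw]

lemma exp_pi_div_two_I : Complex.exp ((Real.pi : ℂ) * I * (1/2)) = I := by
  have h : (Real.pi : ℂ) * I * (1/2) = ((Real.pi/2 : ℝ) : ℂ) * I := by push_cast; ring
  rw [h, Complex.exp_mul_I, ← Complex.ofReal_cos, ← Complex.ofReal_sin,
    Real.cos_pi_div_two, Real.sin_pi_div_two]
  simp

lemma csqrt_neg_im_pos {w : ℂ} (hw : 0 < w.im) : csqrt (-w) = -I * csqrt w := by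
  have hw0 : w ≠ 0 := fun h => by simp [h] at hw
  rw [csqrt_eq (neg_ne_zero.mpr hw0), csqrt_eq hw0, log_neg_im_pos hw, sub_mul,
    Complex.exp_sub, exp_pi_div_two_I]
  rw [div_eq_mul_inv, Complex.inv_I]
  ring

lemma csqrt_neg_im_neg {w : ℂ} (hw : w.im < 0) : csqrt (-w) = I * csqrt w := by
  have hw0 : w ≠ 0 := fun h => by simp [h] at hw
  rw [csqrt_eq (neg_ne_zero.mpr hw0), csqrt_eq hw0, log_neg_im_neg hw, add_mul,
    Complex.exp_add, exp_pi_div_two_I]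
  ring

lemma ratio_pos (w1 w2 : ℂ) (h1 : 0 < w1.im) (h2 : 0 < w2.im)
    (h : 0 < w2.im * w1.re - w2.re * w1.im) :
    Complex.log ((csqrt (-w2) + csqrt (-w1)) / (csqrt (-w2) - csqrt (-w1)))
      = Complex.log ((csqrt w1 + csqrt w2) / (csqrt w1 - csqrt w2)) - Real.pi * I := by
  have hw1 : w1 ≠ 0 := fun hh => by simp [hh] at h1
  have hw2 : w2 ≠ 0 := fun hh => by simp [hh] at h2
  set u := csqrt w1 with hu
  set v := csqrt w2 with hv
  obtain ⟨hur, hui⟩ := csqrt_re_im_pos h1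
  obtain ⟨hvr, hvi⟩ := csqrt_re_im_pos h2
  rw [csqrt_neg_im_pos h1, csqrt_neg_im_pos h2, ← hu, ← hv]
  have huv : u ≠ v := by
    intro he
    have : w1 = w2 := by
      rw [← csqrt_mul_self hw1, ← csqrt_mul_self hw2, ← hu, ← hv, he]
    rw [this] at h
    nlinarith
  have hfac : (-I * v + -I * u) / (-I * v - -I * u) = -((u + v) / (u - v)) := by
    have : (-I * v + -I * u) = -I * (v + u) := by ring
    rw [this]
    have : (-I * v - -I * u) = -I * (v - u) := by ring
    rw [this, mul_div_mul_left _ _ (by simp : (-I : ℂ) ≠ 0)]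
    rw [show v - u = -(u - v) by ring, div_neg, add_comm]
  rw [hfac]
  have hsre : 0 < (v * (starRingEnd ℂ) u).re := by
    simp [Complex.mul_re, Complex.conj_re, Complex.conj_im]
    nlinarith
  have hssim : ((v * (starRingEnd ℂ) u) * (v * (starRingEnd ℂ) u)).im
      = (w2 * (starRingEnd ℂ) w1).im := by
    have : (v * (starRingEnd ℂ) u) * (v * (starRingEnd ℂ) u)
        = (v * v) * (starRingEnd ℂ) (u * u) := by rw [map_mul]; ring
    rw [this, hu, hv, csqrt_mul_self hw1, csqrt_mul_self hw2]
  have hw21 : 0 < (w2 * (starRingEnd ℂ) w1).im := by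
    simp [Complex.mul_im, Complex.conj_re, Complex.conj_im]
    nlinarith
  have hsim : 0 < (v * (starRingEnd ℂ) u).im := by
    set s := v * (starRingEnd ℂ) u
    have h2s : (s * s).im = 2 * s.re * s.im := by
      simp [Complex.mul_im]; ring
    nlinarith [hssim, hw21, h2s]
  have hA : 0 < ((u + v) / (u - v)).im := by
    have hne : u - v ≠ 0 := sub_ne_zero.mpr huv
    have hnor : 0 < Complex.normSq (u - v) := Complex.normSq_pos.mpr hne
    rw [Complex.div_im]
    have hnum : (u + v).im * (u - v).re - (u + v).re * (u - v).im
        = 2 * (v * (starRingEnd ℂ) u).im := by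
      simp [Complex.mul_im, Complex.conj_re, Complex.conj_im]; ring
    rw [div_sub_div_same, hnum]
    positivity
  rw [log_neg_im_pos hA]

lemma ratio_neg (w1 w2 : ℂ) (h1 : w1.im < 0) (h2 : w2.im < 0)
    (h : w2.im * w1.re - w2.re * w1.im < 0) :
    Complex.log ((csqrt (-w2) + csqrt (-w1)) / (csqrt (-w2) - csqrt (-w1)))
      = Complex.log ((csqrt w1 + csqrt w2) / (csqrt w1 - csqrt w2)) + Real.pi * I := by
  have hw1 : w1 ≠ 0 := fun hh => by simp [hh] at h1
  have hw2 : w2 ≠ 0 := fun hh => by simp [hh] at h2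
  set u := csqrt w1 with hu
  set v := csqrt w2 with hv
  obtain ⟨hur, hui⟩ := csqrt_re_im_neg h1
  obtain ⟨hvr, hvi⟩ := csqrt_re_im_neg h2
  rw [csqrt_neg_im_neg h1, csqrt_neg_im_neg h2, ← hu, ← hv]
  have huv : u ≠ v := by
    intro he
    have : w1 = w2 := by
      rw [← csqrt_mul_self hw1, ← csqrt_mul_self hw2, ← hu, ← hv, he]
    rw [this] at h
    nlinarith
  have hfac : (I * v + I * u) / (I * v - I * u) = -((u + v) / (u - v)) := by
    have : (I * v + I * u) = I * (v + u) := by ring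
    rw [this]
    have : (I * v - I * u) = I * (v - u) := by ring
    rw [this, mul_div_mul_left _ _ Complex.I_ne_zero]
    rw [show v - u = -(u - v) by ring, div_neg, add_comm]
  rw [hfac]
  have hsre : 0 < (v * (starRingEnd ℂ) u).re := by
    simp [Complex.mul_re, Complex.conj_re, Complex.conj_im]
    nlinarith
  have hssim : ((v * (starRingEnd ℂ) u) * (v * (starRingEnd ℂ) u)).im
      = (w2 * (starRingEnd ℂ) w1).im := by
    have : (v * (starRingEnd ℂ) u) * (v * (starRingEnd ℂ) u)
        = (v * v) * (starRingEnd ℂ) (u * u) := by rw [map_mul]; ring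
    rw [this, hu, hv, csqrt_mul_self hw1, csqrt_mul_self hw2]
  have hw21 : (w2 * (starRingEnd ℂ) w1).im < 0 := by
    simp [Complex.mul_im, Complex.conj_re, Complex.conj_im]
    nlinarith
  have hsim : (v * (starRingEnd ℂ) u).im < 0 := by
    set s := v * (starRingEnd ℂ) u
    have h2s : (s * s).im = 2 * s.re * s.im := by
      simp [Complex.mul_im]; ring
    nlinarith [hssim, hw21, h2s]
  have hA : ((u + v) / (u - v)).im < 0 := by
    have hne : u - v ≠ 0 := sub_ne_zero.mpr huv
    have hnor : 0 < Complex.normSq (u - v) := Complex.normSq_pos.mpr hne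
    rw [Complex.div_im]
    have hnum : (u + v).im * (u - v).re - (u + v).re * (u - v).im
        = 2 * (v * (starRingEnd ℂ) u).im := by
      simp [Complex.mul_im, Complex.conj_re, Complex.conj_im]; ring
    rw [div_sub_div_same, hnum]
    exact div_neg_of_neg_of_pos (by linarith) hnor
  rw [log_neg_im_neg hA]

/-- `φ̃(z) = φ(z) ± iπ(1 − z)` for `z ∈ ℂ_±`. -/
theorem phiTilde_eq_phiFun (c : ℝ) (hc0 : 0 < c) (hc1 : c < 1) :
    (∀ z : ℂ, 0 < z.im →
      phiTilde c z = phiFun c z + Complex.I * (Real.pi : ℂ) * (1 - z)) ∧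
    (∀ z : ℂ, z.im < 0 →
      phiTilde c z = phiFun c z - Complex.I * (Real.pi : ℂ) * (1 - z)) := by
  have hs0 : 0 < Real.sqrt c := Real.sqrt_pos.mpr hc0
  have hs1 : Real.sqrt c < 1 := by
    have := Real.sqrt_lt_sqrt hc0.le hc1
    rwa [Real.sqrt_one] at this
  have ha : 0 < aconst c := div_pos (by linarith) (by linarith)
  have ha1 : aconst c < 1 := (div_lt_one (by linarith)).mpr (by linarith)
  have hb1 : (1:ℝ) < bconst c := (one_lt_div (by linarith)).mpr (by linarith)
  have hb : 0 < bconst c := by linarith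
  have hab : aconst c < bconst c := lt_trans ha1 hb1
  constructor
  · intro z hz
    have e1 : (1:ℂ) - (aconst c : ℂ) * z = -((aconst c : ℂ) * z - 1) := by ring
    have e2 : (1:ℂ) - (bconst c : ℂ) * z = -((bconst c : ℂ) * z - 1) := by ring
    have e3 : (aconst c : ℂ) - z = -(z - (aconst c : ℂ)) := by ring
    have e4 : (bconst c : ℂ) - z = -(z - (bconst c : ℂ)) := by ring
    rw [phiTilde, phiFun, e1, e2, e3, e4,
      ratio_pos ((bconst c : ℂ) * z - 1) ((aconst c : ℂ) * z - 1)
        (by simp [Complex.mul_im]; positivity)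
        (by simp [Complex.mul_im]; positivity)
        (by simp [Complex.mul_im, Complex.mul_re]; nlinarith),
      ratio_pos (z - (aconst c : ℂ)) (z - (bconst c : ℂ))
        (by simpa using hz) (by simpa using hz)
        (by simp; nlinarith)]
    ring
  · intro z hz
    have e1 : (1:ℂ) - (aconst c : ℂ) * z = -((aconst c : ℂ) * z - 1) := by ring
    have e2 : (1:ℂ) - (bconst c : ℂ) * z = -((bconst c : ℂ) * z - 1) := by ring
    have e3 : (aconst c : ℂ) - z = -(z - (aconst c : ℂ)) := by ring
    have e4 : (bconst c : ℂ) - z = -(z - (bconst c : ℂ)) := by ring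
    rw [phiTilde, phiFun, e1, e2, e3, e4,
      ratio_neg ((bconst c : ℂ) * z - 1) ((aconst c : ℂ) * z - 1)
        (by simp [Complex.mul_im]; nlinarith)
        (by simp [Complex.mul_im]; nlinarith)
        (by simp [Complex.mul_im, Complex.mul_re]; nlinarith),
      ratio_neg (z - (aconst c : ℂ)) (z - (bconst c : ℂ))
        (by simpa using hz) (by simpa using hz)
        (by simp; nlinarith)]
    ring
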